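/- Let G be a noncompact locally compact second countable group and let Π be an invariant point process on G that is almost surely nonempty. Then Π has infinitely many points almost surely. Conversely, if G is compact then every point process on G is almost surely finite. -/

import Mathlib

/-!
Choosing a uniformly random point of a finite nonempty configuration turns an invariant point
process on `G` into a finite left-invariant measure on `G`, of total mass
`P(Π is finite and nonempty)`. On a σ-compact group a nonzero measure charges some compact set,
so a left-invariant one charges every open set, and on a noncompact locally compact group it then
has infinite total mass. Hence the measure vanishes, and so does the probability that `Π` is finite
and nonempty. On a compact group a closed discrete set is compact and discrete, hence finite.
-/

open MeasureTheory Set Filter Topology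
open scoped ENNReal Pointwise

noncomputable section

def shift {G : Type*} [Mul G] (g : G) (ω : Set G) : Set G := (g * ·) '' ω

/-- The σ-algebra on the configuration space `Set G`, generated by the point-counting
functions `ω ↦ |ω ∩ U|` for Borel `U`. -/
instance configMS (G : Type*) [MeasurableSpace G] : MeasurableSpace (Set G) :=
  MeasurableSpace.generateFrom
    {A : Set (Set G) | ∃ (U : Set G) (n : ℕ∞), MeasurableSet U ∧ A = {ω | (ω ∩ U).encard = n}}

def expCount {G : Type*} [MeasurableSpace G] (μ : Measure (Set G)) (U : Set G) : ℝ≥0∞ :=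
  ∫⁻ ω, ((ω ∩ U).encard : ℝ≥0∞) ∂μ

def rooted (G : Type*) [One G] : Set (Set G) := {ω | (1 : G) ∈ ω}

/-- The Palm measure (relative to a reference set `U` of unit Haar volume) of a set `A`
of rooted configurations. -/
def palmSet {G : Type*} [Group G] [MeasurableSpace G] (μ : Measure (Set G)) (U : Set G)
    (A : Set (Set G)) : ℝ≥0∞ :=
  (expCount μ U)⁻¹ * ∫⁻ ω, (({g ∈ U | shift g⁻¹ ω ∈ A}).encard : ℝ≥0∞) ∂μ

/-- The Palm expectation (relative to a reference set `U` of unit Haar volume) of a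
function `h` of rooted configurations. -/
def palmLintegral {G : Type*} [Group G] [MeasurableSpace G] (μ : Measure (Set G)) (U : Set G)
    (h : Set G → ℝ≥0∞) : ℝ≥0∞ :=
  (expCount μ U)⁻¹ * ∫⁻ ω, ∑' x : ↥(ω ∩ U), h (shift (x : G)⁻¹ ω) ∂μ

theorem Set.encard_iUnion_eq_tsum {α ι : Type*} [Countable ι] {s : ι → Set α}
    (hs : Pairwise (Function.onFun Disjoint s)) :
    ((⋃ i, s i).encard : ℝ≥0∞) = ∑' i, ((s i).encard : ℝ≥0∞) := by
  let : MeasurableSpace α := ⊤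
  simp only [← Measure.count_apply MeasurableSpace.measurableSet_top]
  exact measure_iUnion hs fun _ => MeasurableSpace.measurableSet_top

section Configuration

variable {G : Type*}

theorem measurable_encard_inter [MeasurableSpace G] {B : Set G} (hB : MeasurableSet B) :
    Measurable fun ω : Set G => (ω ∩ B).encard :=
  measurable_to_countable' fun n =>
    MeasurableSpace.measurableSet_generateFrom ⟨B, n, hB, rfl⟩

theorem measurable_encard_config [MeasurableSpace G] : Measurable fun ω : Set G => ω.encard := by
  simpa only [inter_univ] using measurable_encard_inter (G := G) MeasurableSet.univ

theorem measurableSet_finite_nonempty [MeasurableSpace G] :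
    MeasurableSet {ω : Set G | ω.Finite ∧ ω.Nonempty} := by
  simp only [← encard_ne_top_iff, ← encard_ne_zero]
  exact measurable_encard_config (MeasurableSet.of_discrete (s := {n : ℕ∞ | n ≠ ⊤ ∧ n ≠ 0}))

theorem encard_shift_inter [Group G] (g : G) (ω B : Set G) :
    (shift g ω ∩ B).encard = (ω ∩ (g * ·) ⁻¹' B).encard := by
  rw [shift, ← image_inter_preimage]
  exact (mul_right_injective g).encard_image _

theorem encard_shift [Group G] (g : G) (ω : Set G) : (shift g ω).encard = ω.encard :=
  (mul_right_injective g).encard_image ω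

theorem measurable_shift [Group G] [MeasurableSpace G] [MeasurableMul G] (g : G) :
    Measurable (shift g : Set G → Set G) := by
  refine measurable_generateFrom ?_
  rintro _ ⟨U, n, hU, rfl⟩
  simp only [preimage_ofPred_eq, encard_shift_inter]
  exact MeasurableSpace.measurableSet_generateFrom ⟨_, n, measurable_const_mul g hU, rfl⟩

end Configuration

section UniformPoint

variable {G : Type*} [MeasurableSpace G]

theorem measurable_encard_inter_div_encard {B : Set G} (hB : MeasurableSet B) :
    Measurable fun ω : Set G => ((ω ∩ B).encard : ℝ≥0∞) / ω.encard :=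
  (Measurable.of_discrete.comp (measurable_encard_inter hB)).div
    (Measurable.of_discrete.comp measurable_encard_config)

/-- The law of a uniformly chosen point of the process, restricted to the event that the
configuration is finite and nonempty. In `ℝ≥0∞` the ratio `|ω ∩ B| / |ω|` vanishes both for
`ω = ∅` (as `0 / 0 = 0`) and for infinite `ω` (as `x / ⊤ = 0`). -/
def uniformPoint (μ : Measure (Set G)) : Measure G :=
  Measure.ofMeasurable (fun B _ => ∫⁻ ω, ((ω ∩ B).encard : ℝ≥0∞) / ω.encard ∂μ)
    (by simp)
    (fun B hB hd => by
      rw [← lintegral_tsum fun i => (measurable_encard_inter_div_encard (hB i)).aemeasurable]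
      refine lintegral_congr fun ω => ?_
      simp only [inter_iUnion, ENNReal.div_eq_inv_mul, ENNReal.tsum_mul_left]
      rw [encard_iUnion_eq_tsum fun i j hij => ((hd hij).inter_left' ω).inter_right' ω])

theorem uniformPoint_apply (μ : Measure (Set G)) {B : Set G} (hB : MeasurableSet B) :
    uniformPoint μ B = ∫⁻ ω, ((ω ∩ B).encard : ℝ≥0∞) / ω.encard ∂μ :=
  Measure.ofMeasurable_apply B hB

theorem uniformPoint_univ (μ : Measure (Set G)) :
    uniformPoint μ univ = μ {ω | ω.Finite ∧ ω.Nonempty} := by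
  rw [uniformPoint_apply μ .univ, ← lintegral_indicator_one measurableSet_finite_nonempty]
  refine lintegral_congr fun ω => ?_
  rw [inter_univ]
  by_cases h : ω.Finite ∧ ω.Nonempty
  · rw [indicator_of_mem (s := {ω : Set G | ω.Finite ∧ ω.Nonempty}) h, Pi.one_apply]
    exact ENNReal.div_self (ENat.toENNReal_eq_zero.not.2 (encard_ne_zero.2 h.2))
      (ENat.toENNReal_ne_top.2 (encard_ne_top_iff.2 h.1))
  · rw [indicator_of_notMem (s := {ω : Set G | ω.Finite ∧ ω.Nonempty}) h]
    rcases not_and_or.1 h with hinf | hempty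
    · rw [encard_eq_top_iff.2 hinf, ENat.toENNReal_top, ENNReal.div_top]
    · simp [not_nonempty_iff_eq_empty.1 hempty]

instance (μ : Measure (Set G)) [IsFiniteMeasure μ] : IsFiniteMeasure (uniformPoint μ) :=
  ⟨by rw [uniformPoint_univ]; exact measure_lt_top μ _⟩

theorem isMulLeftInvariant_uniformPoint [Group G] [MeasurableMul G] {μ : Measure (Set G)}
    (hμ : ∀ g : G, μ.map (shift g) = μ) : (uniformPoint μ).IsMulLeftInvariant := by
  refine ⟨fun g => Measure.ext fun B hB => ?_⟩
  rw [Measure.map_apply (measurable_const_mul g) hB, uniformPoint_apply μ hB,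
    uniformPoint_apply μ (measurable_const_mul g hB)]
  calc ∫⁻ ω, ((ω ∩ (g * ·) ⁻¹' B).encard : ℝ≥0∞) / ω.encard ∂μ
      = ∫⁻ ω, ((shift g ω ∩ B).encard : ℝ≥0∞) / (shift g ω).encard ∂μ := by
        simp only [encard_shift_inter, encard_shift]
    _ = ∫⁻ ω, ((ω ∩ B).encard : ℝ≥0∞) / ω.encard ∂(μ.map (shift g)) :=
        (lintegral_map (measurable_encard_inter_div_encard hB) (measurable_shift g)).symm
    _ = ∫⁻ ω, ((ω ∩ B).encard : ℝ≥0∞) / ω.encard ∂μ := by rw [hμ g]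

end UniformPoint

theorem MeasureTheory.Measure.exists_isCompact_measure_ne_zero {X : Type*} [TopologicalSpace X]
    [SigmaCompactSpace X] [MeasurableSpace X] {ν : Measure X} (hν : ν ≠ 0) :
    ∃ K, IsCompact K ∧ ν K ≠ 0 := by
  by_contra! h
  refine hν (Measure.measure_univ_eq_zero.1 ?_)
  rw [← iUnion_compactCovering, measure_iUnion_null_iff]
  exact fun n => h _ (isCompact_compactCovering X n)

theorem MeasureTheory.Measure.eq_zero_of_isMulLeftInvariant_of_noncompact {G : Type*} [Group G]
    [TopologicalSpace G] [IsTopologicalGroup G] [WeaklyLocallyCompactSpace G]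
    [SigmaCompactSpace G] [NoncompactSpace G] [MeasurableSpace G] [BorelSpace G]
    (ν : Measure G) [IsFiniteMeasure ν] [ν.IsMulLeftInvariant] : ν = 0 := by
  by_contra hν
  obtain ⟨K, hK, hνK⟩ := ν.exists_isCompact_measure_ne_zero hν
  have : ν.IsOpenPosMeasure := isOpenPosMeasure_of_mulLeftInvariant_of_compact K hK hνK
  exact measure_ne_top ν univ (measure_univ_of_isMulLeftInvariant ν)

/-- an a.s. nonempty invariant point process on a noncompact group has
infinitely many points a.s.; conversely on a compact group every point process is a.s. finite. -/
theorem statement1 {G : Type*} [Group G] [TopologicalSpace G] [IsTopologicalGroup G]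
    [LocallyCompactSpace G] [SecondCountableTopology G] [MeasurableSpace G] [BorelSpace G]
    (μ : Measure (Set G)) [IsProbabilityMeasure μ]
    (hsupp : ∀ᵐ ω ∂μ, IsClosed ω ∧ DiscreteTopology ↥ω)
    (hinv : ∀ g : G, μ.map (shift g) = μ) :
    (¬ CompactSpace G → (∀ᵐ ω ∂μ, ω ≠ ∅) → ∀ᵐ ω ∂μ, ω.Infinite) ∧
      (CompactSpace G → ∀ᵐ ω ∂μ, ω.Finite) := by
  refine ⟨fun hnc hne => ?_, fun _ => ?_⟩
  · have : NoncompactSpace G := not_compactSpace_iff.1 hnc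
    have : (uniformPoint μ).IsMulLeftInvariant := isMulLeftInvariant_uniformPoint hinv
    have hfin : μ {ω | ω.Finite ∧ ω.Nonempty} = 0 := by
      rw [← uniformPoint_univ, (uniformPoint μ).eq_zero_of_isMulLeftInvariant_of_noncompact,
        Measure.coe_zero, Pi.zero_apply]
    filter_upwards [measure_eq_zero_iff_ae_notMem.1 hfin, hne] with ω hω hne
    exact fun hf => hω ⟨hf, nonempty_iff_ne_empty.2 hne⟩
  · filter_upwards [hsupp] with ω hω
    exact hω.1.isCompact.finite (isDiscrete_iff_discreteTopology.2 hω.2)
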